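/- arXiv:1212.4854 — 4 statements merged into one kernel-verified Lean document; each statement's English description precedes it below -/
import Mathlib

section
/- Let Λ be a measurable space equipped with a probability measure μ, and let A, B : S² → Λ → ℝ be functions (where S² denotes the unit sphere in ℝ³) such that for every unit vector n, the maps λ ↦ A n λ and λ ↦ B n λ are measurable and take values only in {-1, 1}. Then for all unit vectors a, a', b, b' in ℝ³, |∫ A a λ · B b λ dμ(λ) − ∫ A a λ · B b' λ dμ(λ) + ∫ A a' λ · B b λ dμ(λ) + ∫ A a' λ · B b' λ dμ(λ)| ≤ 2. -/
open MeasureTheory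

/-! Pointwise, `x (y - y') + x' (y + y')` has absolute value at most `|y - y'| + |y + y'| ≤ 2`
when all four values lie in `[-1, 1]`; integrating this bound against a probability measure gives
the CHSH inequality for the correlations. -/

lemma abs_sub_add_abs_add_le_two {y y' : ℝ} (hy : |y| ≤ 1) (hy' : |y'| ≤ 1) :
    |y - y'| + |y + y'| ≤ 2 := by
  obtain ⟨hy₁, hy₂⟩ := abs_le.mp hy
  obtain ⟨hy'₁, hy'₂⟩ := abs_le.mp hy'
  rcases abs_cases (y - y') with ⟨h, -⟩ | ⟨h, -⟩ <;>
    rcases abs_cases (y + y') with ⟨h', -⟩ | ⟨h', -⟩ <;> linarith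

lemma abs_chsh_le_two {x x' y y' : ℝ} (hx : |x| ≤ 1) (hx' : |x'| ≤ 1) (hy : |y| ≤ 1)
    (hy' : |y'| ≤ 1) : |x * y - x * y' + x' * y + x' * y'| ≤ 2 :=
  calc |x * y - x * y' + x' * y + x' * y'|
      = |x * (y - y') + x' * (y + y')| := by congr 1; ring
    _ ≤ |x| * |y - y'| + |x'| * |y + y'| := by
        rw [← abs_mul, ← abs_mul]; exact abs_add_le _ _
    _ ≤ |y - y'| + |y + y'| :=
        add_le_add (mul_le_of_le_one_left (abs_nonneg _) hx)
          (mul_le_of_le_one_left (abs_nonneg _) hx')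
    _ ≤ 2 := abs_sub_add_abs_add_le_two hy hy'

section Integral

variable {Λ : Type*} [MeasurableSpace Λ] {μ : Measure Λ} {f f' g g' : Λ → ℝ}

lemma integrable_mul_of_abs_le_one [IsFiniteMeasure μ] (hf : AEStronglyMeasurable f μ)
    (hg : AEStronglyMeasurable g μ) (hf₁ : ∀ᵐ l ∂μ, |f l| ≤ 1) (hg₁ : ∀ᵐ l ∂μ, |g l| ≤ 1) :
    Integrable (fun l ↦ f l * g l) μ :=
  .of_bound (hf.mul hg) 1 <| by
    filter_upwards [hf₁, hg₁] with l hfl hgl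
    rw [Real.norm_eq_abs, abs_mul]
    exact mul_le_one₀ hfl (abs_nonneg _) hgl

theorem abs_integral_chsh_le_two [IsProbabilityMeasure μ] (hf : AEStronglyMeasurable f μ)
    (hf' : AEStronglyMeasurable f' μ) (hg : AEStronglyMeasurable g μ)
    (hg' : AEStronglyMeasurable g' μ) (hf₁ : ∀ᵐ l ∂μ, |f l| ≤ 1) (hf'₁ : ∀ᵐ l ∂μ, |f' l| ≤ 1)
    (hg₁ : ∀ᵐ l ∂μ, |g l| ≤ 1) (hg'₁ : ∀ᵐ l ∂μ, |g' l| ≤ 1) :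
    |(∫ l, f l * g l ∂μ) - (∫ l, f l * g' l ∂μ)
      + (∫ l, f' l * g l ∂μ) + (∫ l, f' l * g' l ∂μ)| ≤ 2 := by
  have i₁ := integrable_mul_of_abs_le_one hf hg hf₁ hg₁
  have i₂ := integrable_mul_of_abs_le_one hf hg' hf₁ hg'₁
  have i₃ := integrable_mul_of_abs_le_one hf' hg hf'₁ hg₁
  have i₄ := integrable_mul_of_abs_le_one hf' hg' hf'₁ hg'₁
  have i₁₂ : Integrable (fun l ↦ f l * g l - f l * g' l) μ := i₁.sub i₂
  have i₁₂₃ : Integrable (fun l ↦ f l * g l - f l * g' l + f' l * g l) μ := i₁₂.add i₃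
  rw [← integral_sub i₁ i₂, ← integral_add i₁₂ i₃, ← integral_add i₁₂₃ i₄]
  have bound : ∀ᵐ l ∂μ, ‖f l * g l - f l * g' l + f' l * g l + f' l * g' l‖ ≤ 2 := by
    filter_upwards [hf₁, hf'₁, hg₁, hg'₁] with l h₁ h₂ h₃ h₄
    exact abs_chsh_le_two h₁ h₂ h₃ h₄
  simpa using norm_integral_le_of_norm_le_const bound

end Integral

/-- The Clauser-Horne-Shimony-Holt theorem: any local, deterministic hidden
variable model `(Λ, A, B, μ)` of the EPR-Bohm experiment, with `±1`-valued
observables `A, B : S² × Λ → {-1, 1}`, satisfies the CHSH inequality. -/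
theorem chsh {Λ : Type*} [MeasurableSpace Λ] (μ : Measure Λ) [IsProbabilityMeasure μ]
    (A B : EuclideanSpace ℝ (Fin 3) → Λ → ℝ)
    (hAmeas : ∀ n : EuclideanSpace ℝ (Fin 3), ‖n‖ = 1 → Measurable (A n))
    (hBmeas : ∀ n : EuclideanSpace ℝ (Fin 3), ‖n‖ = 1 → Measurable (B n))
    (hAval : ∀ n : EuclideanSpace ℝ (Fin 3), ‖n‖ = 1 → ∀ l : Λ, A n l ∈ ({-1, 1} : Set ℝ))
    (hBval : ∀ n : EuclideanSpace ℝ (Fin 3), ‖n‖ = 1 → ∀ l : Λ, B n l ∈ ({-1, 1} : Set ℝ)) :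
    ∀ a a' b b' : EuclideanSpace ℝ (Fin 3),
      ‖a‖ = 1 → ‖a'‖ = 1 → ‖b‖ = 1 → ‖b'‖ = 1 →
      |(∫ l, A a l * B b l ∂μ) - (∫ l, A a l * B b' l ∂μ)
        + (∫ l, A a' l * B b l ∂μ) + (∫ l, A a' l * B b' l ∂μ)| ≤ 2 := by
  have abs_le_one {x : ℝ} (hx : x ∈ ({-1, 1} : Set ℝ)) : |x| ≤ 1 := by
    rcases hx with rfl | rfl <;> simp
  intro a a' b b' ha ha' hb hb'
  exact abs_integral_chsh_le_two
    (hAmeas a ha).aestronglyMeasurable (hAmeas a' ha').aestronglyMeasurable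
    (hBmeas b hb).aestronglyMeasurable (hBmeas b' hb').aestronglyMeasurable
    (.of_forall fun l ↦ abs_le_one (hAval a ha l))
    (.of_forall fun l ↦ abs_le_one (hAval a' ha' l))
    (.of_forall fun l ↦ abs_le_one (hBval b hb l))
    (.of_forall fun l ↦ abs_le_one (hBval b' hb' l))
end

section
/- There exist unit vectors a, a', b, b' in ℝ³ (with the standard Euclidean inner product ⟪·,·⟫) such that |(−⟪a,b⟫) − (−⟪a,b'⟫) + (−⟪a',b⟫) + (−⟪a',b'⟫)| = 2√2 > 2. -/
open scoped RealInnerProductSpace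

/-! Take `a, a'` orthonormal and `b, b'` the unit vectors `∓(a ± a')/√2` bisecting them: each
of the four correlations then contributes `1/√2` to the CHSH combination, for a total of
`4/√2 = 2√2`. -/

section CHSH

variable {E : Type*} [NormedAddCommGroup E] [InnerProductSpace ℝ E]

def chshValue (a a' b b' : E) : ℝ :=
  (-⟪a, b⟫) - (-⟪a, b'⟫) + (-⟪a', b⟫) + (-⟪a', b'⟫)

variable {u v : E}

lemma norm_inv_sqrt_two_smul_add (hu : ‖u‖ = 1) (hv : ‖v‖ = 1) (huv : ⟪u, v⟫ = 0) :
    ‖(√2)⁻¹ • (u + v)‖ = 1 := by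
  rw [norm_smul, norm_add_eq_sqrt_iff_real_inner_eq_zero.2 huv, hu, hv,
    Real.norm_of_nonneg (by positivity)]
  norm_num

lemma norm_inv_sqrt_two_smul_sub (hu : ‖u‖ = 1) (hv : ‖v‖ = 1) (huv : ⟪u, v⟫ = 0) :
    ‖(√2)⁻¹ • (u - v)‖ = 1 := by
  rw [norm_smul, norm_sub_eq_sqrt_iff_real_inner_eq_zero.2 huv, hu, hv,
    Real.norm_of_nonneg (by positivity)]
  norm_num

lemma chshValue_bisectors (hu : ‖u‖ = 1) (hv : ‖v‖ = 1) (huv : ⟪u, v⟫ = 0) :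
    chshValue u v (-((√2)⁻¹ • (u + v))) ((√2)⁻¹ • (u - v)) = 2 * √2 := by
  have hvu : ⟪v, u⟫ = 0 := by rw [real_inner_comm, huv]
  have huu : ⟪u, u⟫ = 1 := by rw [real_inner_self_eq_norm_sq, hu, one_pow]
  have hvv : ⟪v, v⟫ = 1 := by rw [real_inner_self_eq_norm_sq, hv, one_pow]
  simp only [chshValue, inner_neg_right, real_inner_smul_right, inner_add_right, inner_sub_right,
    huu, hvv, huv, hvu]
  field_simp
  norm_num

end CHSH

/-- The quantum mechanical correlations `E(a,b) = -⟪a,b⟫` of the EPR-Bohm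
experiment violate the CHSH inequality: there are unit vectors `a, a', b, b'`
for which the CHSH combination attains the value `2√2 > 2`. -/
theorem qm_violates_chsh :
    ∃ a a' b b' : EuclideanSpace ℝ (Fin 3),
      ‖a‖ = 1 ∧ ‖a'‖ = 1 ∧ ‖b‖ = 1 ∧ ‖b'‖ = 1 ∧
      |(-⟪a, b⟫) - (-⟪a, b'⟫) + (-⟪a', b⟫) + (-⟪a', b'⟫)| = 2 * Real.sqrt 2 ∧
      2 * Real.sqrt 2 > 2 := by
  obtain ⟨hunit, horth⟩ := EuclideanSpace.orthonormal_single (𝕜 := ℝ) (ι := Fin 3)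
  have hu := hunit 0
  have hv := hunit 1
  have huv : ⟪EuclideanSpace.single (0 : Fin 3) (1 : ℝ), EuclideanSpace.single 1 1⟫ = 0 :=
    horth (by decide)
  refine ⟨_, _, _, _, hu, hv, by rw [norm_neg, norm_inv_sqrt_two_smul_add hu hv huv],
    norm_inv_sqrt_two_smul_sub hu hv huv, ?_, by linarith [Real.one_lt_sqrt_two]⟩
  rw [← chshValue, chshValue_bisectors hu hv huv, abs_of_pos (by positivity)]
end

section
/- There do not exist a measurable space Λ, a probability measure μ on Λ, and functions A, B : S² → Λ → ℝ (S² the unit sphere in ℝ³) with: (i) for every unit vector n, λ ↦ A n λ and λ ↦ B n λ are measurable with values in {-1, 1}, and (ii) for all unit vectors a, b in ℝ³, ∫ A a λ · B b λ dμ(λ) = −⟪a,b⟫, where ⟪·,·⟫ is the Euclidean inner product on ℝ³. -/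
/-!
Perfect anticorrelation `∫ A n · B n dμ = -1` forces `B n = -A n` almost everywhere, so the
model would give `∫ A a · A b dμ = ⟪a, b⟫` for all unit vectors. For `±1`-valued `x, y, z` one
has `|x y - x z| = 1 - y z`, and integrating yields Bell's inequality
`|⟪a, b⟫ - ⟪a, c⟫| ≤ 1 - ⟪b, c⟫`, which fails for `a = e₀`, `c = e₁`, `b = (3 e₀ + 4 e₁) / 5`.
-/

open MeasureTheory
open scoped RealInnerProductSpace

lemma mul_self_eq_one_of_mem_pm_one {x : ℝ} (hx : x ∈ ({-1, 1} : Set ℝ)) : x * x = 1 := by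
  rcases hx with rfl | rfl <;> norm_num

lemma abs_mul_eq_one_of_mem_pm_one {x y : ℝ} (hx : x ∈ ({-1, 1} : Set ℝ))
    (hy : y ∈ ({-1, 1} : Set ℝ)) : |x * y| = 1 := by
  rcases hx with rfl | rfl <;> rcases hy with rfl | rfl <;> norm_num

lemma eq_neg_of_one_add_mul_eq_zero {x y : ℝ} (hx : x * x = 1) (h : 1 + x * y = 0) :
    y = -x :=
  calc y = x * x * y := by rw [hx, one_mul]
    _ = -x := by linear_combination x * h

lemma abs_mul_sub_mul_eq_one_sub_mul {x y z : ℝ} (hx : x ∈ ({-1, 1} : Set ℝ))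
    (hy : y ∈ ({-1, 1} : Set ℝ)) (hz : z ∈ ({-1, 1} : Set ℝ)) :
    |x * y - x * z| = 1 - y * z := by
  rcases hx with rfl | rfl <;> rcases hy with rfl | rfl <;> rcases hz with rfl | rfl <;> norm_num

section PlusMinusOne

variable {Λ : Type*} [MeasurableSpace Λ] {μ : Measure Λ} {f g h : Λ → ℝ}

lemma integrable_mul_of_mem_pm_one [IsFiniteMeasure μ] (hf : Measurable f) (hg : Measurable g)
    (hf₁ : ∀ l, f l ∈ ({-1, 1} : Set ℝ)) (hg₁ : ∀ l, g l ∈ ({-1, 1} : Set ℝ)) :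
    Integrable (fun l ↦ f l * g l) μ := by
  refine .of_bound (hf.mul hg).aestronglyMeasurable 1 (.of_forall fun l ↦ ?_)
  rw [Real.norm_eq_abs, abs_mul_eq_one_of_mem_pm_one (hf₁ l) (hg₁ l)]

lemma ae_eq_neg_of_integral_mul_eq_neg_one [IsProbabilityMeasure μ] (hf : Measurable f)
    (hg : Measurable g) (hf₁ : ∀ l, f l ∈ ({-1, 1} : Set ℝ)) (hg₁ : ∀ l, g l ∈ ({-1, 1} : Set ℝ))
    (h : ∫ l, f l * g l ∂μ = -1) : g =ᵐ[μ] -f := by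
  have hint := integrable_mul_of_mem_pm_one (μ := μ) hf hg hf₁ hg₁
  have hnonneg : 0 ≤ fun l ↦ 1 + f l * g l := fun l ↦ by
    change 0 ≤ 1 + f l * g l
    linarith [neg_abs_le (f l * g l), abs_mul_eq_one_of_mem_pm_one (hf₁ l) (hg₁ l)]
  have hzero : ∫ l, (1 + f l * g l) ∂μ = 0 := by
    rw [integral_add (integrable_const 1) hint, h]
    simp
  filter_upwards [(integral_eq_zero_iff_of_nonneg hnonneg
    ((integrable_const 1).add hint)).mp hzero] with l hl
  exact eq_neg_of_one_add_mul_eq_zero (mul_self_eq_one_of_mem_pm_one (hf₁ l)) hl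

theorem bell_inequality [IsProbabilityMeasure μ] (hf : Measurable f) (hg : Measurable g)
    (hh : Measurable h) (hf₁ : ∀ l, f l ∈ ({-1, 1} : Set ℝ))
    (hg₁ : ∀ l, g l ∈ ({-1, 1} : Set ℝ)) (hh₁ : ∀ l, h l ∈ ({-1, 1} : Set ℝ)) :
    |∫ l, f l * g l ∂μ - ∫ l, f l * h l ∂μ| ≤ 1 - ∫ l, g l * h l ∂μ := by
  have hfg := integrable_mul_of_mem_pm_one (μ := μ) hf hg hf₁ hg₁
  have hfh := integrable_mul_of_mem_pm_one (μ := μ) hf hh hf₁ hh₁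
  have hgh := integrable_mul_of_mem_pm_one (μ := μ) hg hh hg₁ hh₁
  calc |∫ l, f l * g l ∂μ - ∫ l, f l * h l ∂μ|
      = |∫ l, (f l * g l - f l * h l) ∂μ| := by rw [integral_sub hfg hfh]
    _ ≤ ∫ l, |f l * g l - f l * h l| ∂μ := abs_integral_le_integral_abs
    _ = ∫ l, (1 - g l * h l) ∂μ :=
      integral_congr_ae (.of_forall fun l ↦ abs_mul_sub_mul_eq_one_sub_mul (hf₁ l) (hg₁ l) (hh₁ l))
    _ = 1 - ∫ l, g l * h l ∂μ := by simp [integral_sub (integrable_const 1) hgh]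

end PlusMinusOne

lemma exists_bell_violation {E : Type*} [NormedAddCommGroup E] [InnerProductSpace ℝ E]
    {u w : E} (hu : ‖u‖ = 1) (hw : ‖w‖ = 1) (huw : ⟪u, w⟫ = 0) :
    ∃ a b c : E, ‖a‖ = 1 ∧ ‖b‖ = 1 ∧ ‖c‖ = 1 ∧ 1 - ⟪b, c⟫ < |⟪a, b⟫ - ⟪a, c⟫| := by
  refine ⟨u, (3 / 5 : ℝ) • u + (4 / 5 : ℝ) • w, w, hu, ?_, hw, ?_⟩
  · rw [← pow_eq_one_iff_of_nonneg (norm_nonneg _) two_ne_zero, norm_add_sq_real, norm_smul,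
      norm_smul, real_inner_smul_left, real_inner_smul_right, huw, hu, hw]
    norm_num
  · norm_num [inner_add_left, inner_add_right, real_inner_smul_left, real_inner_smul_right,
      real_inner_self_eq_norm_sq, hu, hw, huw]

/-- Corollary 1: there is no local, deterministic hidden variable model
`(Λ, A, B, μ)` of the EPR-Bohm experiment, with `±1`-valued observables,
reproducing the quantum mechanical product expectation values
`∫ A(a,λ)B(b,λ) dμ = -⟪a,b⟫`. -/
theorem no_hidden_variable_model :
    ¬ ∃ (Λ : Type) (_ : MeasurableSpace Λ) (μ : Measure Λ)
        (_ : IsProbabilityMeasure μ)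
        (A B : EuclideanSpace ℝ (Fin 3) → Λ → ℝ),
      (∀ n : EuclideanSpace ℝ (Fin 3), ‖n‖ = 1 →
        Measurable (A n) ∧ Measurable (B n) ∧
        (∀ l : Λ, A n l ∈ ({-1, 1} : Set ℝ)) ∧
        (∀ l : Λ, B n l ∈ ({-1, 1} : Set ℝ))) ∧
      (∀ a b : EuclideanSpace ℝ (Fin 3), ‖a‖ = 1 → ‖b‖ = 1 →
        (∫ l, A a l * B b l ∂μ) = -⟪a, b⟫) := by
  rintro ⟨Λ, _, μ, _, A, B, hobs, hcorr⟩
  have hAA : ∀ a b : EuclideanSpace ℝ (Fin 3), ‖a‖ = 1 → ‖b‖ = 1 →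
      ∫ l, A a l * A b l ∂μ = ⟪a, b⟫ := by
    intro a b ha hb
    obtain ⟨hA, hB, hA₁, hB₁⟩ := hobs b hb
    have hanti : B b =ᵐ[μ] -A b := ae_eq_neg_of_integral_mul_eq_neg_one hA hB hA₁ hB₁ <| by
      rw [hcorr b b hb hb, real_inner_self_eq_norm_sq, hb, one_pow]
    have hneg : ∫ l, A a l * B b l ∂μ = -∫ l, A a l * A b l ∂μ := by
      rw [← integral_neg]
      refine integral_congr_ae ?_
      filter_upwards [hanti] with l hl
      simp [hl]
    linarith [hcorr a b ha hb]
  obtain ⟨a, b, c, ha, hb, hc, hviolation⟩ :=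
    exists_bell_violation (u := EuclideanSpace.single (0 : Fin 3) (1 : ℝ))
      (w := EuclideanSpace.single 1 1) (by simp) (by simp)
      (by simp [EuclideanSpace.inner_single_left])
  obtain ⟨hAa, -, hAa₁, -⟩ := hobs a ha
  obtain ⟨hAb, -, hAb₁, -⟩ := hobs b hb
  obtain ⟨hAc, -, hAc₁, -⟩ := hobs c hc
  have hbell := bell_inequality (μ := μ) hAa hAb hAc hAa₁ hAb₁ hAc₁
  rw [hAA a b ha hb, hAA a c ha hc, hAA b c hb hc] at hbell
  linarith
end

section
/- For v ∈ ℝ³, let M(v) denote the 3×3 real antisymmetric matrix with entries M(v)_{ij} = Σ_k ε_{kij} v_k (ε the Levi-Civita symbol with ε_{123} = 1), and for a unit vector ξ define P_ξ(X) = (1/√2) Σ_{n,a,b} X_{ab} ε_{nab} ξ_n. Then for all unit vectors α, β ∈ ℝ³ and every λ ∈ {-1, 1}, P_α((λ/√2)·M(α)) · P_β(−(λ/√2)·M(β)) = −1; consequently the uniform average over λ ∈ {-1,1}, (1/2)·Σ_{λ ∈ {-1,1}} P_α((λ/√2)M(α)) · P_β(−(λ/√2)M(β)), equals −1 for all unit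 vectors α, β. -/
/-- The Levi-Civita symbol on `Fin 3`, with `ε 0 1 2 = 1`. -/
def leviCivita : Fin 3 → Fin 3 → Fin 3 → ℝ := fun i j k =>
  if (i, j, k) = (0, 1, 2) ∨ (i, j, k) = (1, 2, 0) ∨ (i, j, k) = (2, 0, 1) then 1
  else if (i, j, k) = (2, 1, 0) ∨ (i, j, k) = (1, 0, 2) ∨ (i, j, k) = (0, 2, 1) then -1
  else 0

/-- The antisymmetric matrix associated with a vector `v ∈ ℝ³`:
`M(v)_{ij} = Σ_k ε_{kij} v_k`. -/
def rotTensor (v : EuclideanSpace ℝ (Fin 3)) : Matrix (Fin 3) (Fin 3) ℝ :=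
  fun i j => ∑ k, leviCivita k i j * v k

/-- The projection map associated with a measurement vector `ξ`:
`P_ξ(X) = (1/√2) Σ_{n,a,b} X_{ab} ε_{nab} ξ_n`. -/
noncomputable def proj (ξ : EuclideanSpace ℝ (Fin 3)) (X : Matrix (Fin 3) (Fin 3) ℝ) : ℝ :=
  (1 / Real.sqrt 2) * ∑ n, ∑ a, ∑ b, X a b * leviCivita n a b * ξ n

set_option maxHeartbeats 1000000 in
lemma proj_smul (ξ : EuclideanSpace ℝ (Fin 3)) (hξ : ξ 0^2 + ξ 1^2 + ξ 2^2 = 1) (c : ℝ) :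
    proj ξ (c • rotTensor ξ) = Real.sqrt 2 * c := by
  have h2 : Real.sqrt 2 * Real.sqrt 2 = 2 := Real.mul_self_sqrt (by norm_num)
  have hne : Real.sqrt 2 ≠ 0 := by positivity
  simp only [proj, rotTensor, Matrix.smul_apply, smul_eq_mul, Fin.sum_univ_three, leviCivita,
    Prod.mk.injEq]
  norm_num [Fin.ext_iff]
  field_simp
  linear_combination 2*c*hξ - c*h2

/-- The failure of the geometric model: the product of Alice's and Bob's
recorded (projected) outcomes is identically `−1`, so its uniform average over
the hidden variable `λ ∈ {-1, 1}` equals `−1` for all measurement vectors. -/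
theorem projected_product_constant (α β : EuclideanSpace ℝ (Fin 3))
    (hα : ‖α‖ = 1) (hβ : ‖β‖ = 1) :
    (∀ l ∈ ({-1, 1} : Set ℝ),
      proj α ((l / Real.sqrt 2) • rotTensor α)
        * proj β ((-(l / Real.sqrt 2)) • rotTensor β) = -1) ∧
    (1 / 2 : ℝ) * ∑ l ∈ ({-1, 1} : Finset ℝ),
      proj α ((l / Real.sqrt 2) • rotTensor α)
        * proj β ((-(l / Real.sqrt 2)) • rotTensor β) = -1 := by
  have hsq : ∀ ξ : EuclideanSpace ℝ (Fin 3), ‖ξ‖ = 1 → ξ 0^2 + ξ 1^2 + ξ 2^2 = 1 := by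
    intro ξ h
    rw [EuclideanSpace.norm_eq, Real.sqrt_eq_one, Fin.sum_univ_three] at h
    simpa [Real.norm_eq_abs, sq_abs] using h
  have h2 : Real.sqrt 2 * Real.sqrt 2 = 2 := Real.mul_self_sqrt (by norm_num)
  have hne : Real.sqrt 2 ≠ 0 := by positivity
  have key : ∀ l : ℝ, l = -1 ∨ l = 1 →
      proj α ((l / Real.sqrt 2) • rotTensor α)
        * proj β ((-(l / Real.sqrt 2)) • rotTensor β) = -1 := by
    intro l hl
    rw [proj_smul α (hsq α hα), proj_smul β (hsq β hβ)]
    have e1 : Real.sqrt 2 * (l / Real.sqrt 2) = l := by field_simp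
    have e2 : Real.sqrt 2 * (-(l / Real.sqrt 2)) = -l := by field_simp
    rw [e1, e2]
    rcases hl with rfl | rfl <;> norm_num
  constructor
  · intro l hl
    exact key l (by simpa using hl)
  · rw [Finset.sum_pair (by norm_num : (-1 : ℝ) ≠ 1), key (-1) (Or.inl rfl),
      key 1 (Or.inr rfl)]
    norm_num
end
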